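/- Let s>0 and λ>0, and let μ be the Gamma distribution on (0,∞) with density (λ^{2s}/Γ(2s)) y^{2s-1} e^{-λ y}. Define, for f:(0,∞)²→ℝ polynomial, (𝓛 f)(y_1,y_2) = ∫_0^{y_1}(dα/α)(1-α/y_1)^{2s-1}[f(y_1-α,y_2+α)-f(y_1,y_2)] + ∫_0^{y_2}(dα/α)(1-α/y_2)^{2s-1}[f(y_1+α,y_2-α)-f(y_1,y_2)]. Then for all polynomials f,g: ∫∫ (𝓛f)(y_1,y_2) g(y_1,y_2) μ(dy_1)μ(dy_2) = ∫∫ f(y_1,y_2) (𝓛g)(y_1,y_2) μ(dy_1)μ(dy_2). -/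

import Mathlib

open MeasureTheory Real

noncomputable section

namespace HeatModel

/-- Density of the Gamma(2s, lam) distribution. -/
def gammaDensity (s lam : ℝ) (y : ℝ) : ℝ :=
  lam ^ (2 * s) / Real.Gamma (2 * s) * y ^ (2 * s - 1) * Real.exp (-(lam * y))

/-- The bulk exchange generator of the integrable heat conduction model on one bond. -/
def bondGen (s : ℝ) (f : ℝ → ℝ → ℝ) (y₁ y₂ : ℝ) : ℝ :=
  (∫ a in Set.Ioo 0 y₁, (1 - a / y₁) ^ (2 * s - 1) / a * (f (y₁ - a) (y₂ + a) - f y₁ y₂))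
    + ∫ a in Set.Ioo 0 y₂, (1 - a / y₂) ^ (2 * s - 1) / a * (f (y₁ + a) (y₂ - a) - f y₁ y₂)

/-!
A jump of size `a` moves energy between the states `(x + a, v)` and `(x, v + a)`. Because
`ρ(x + a) (1 - a/(x + a))^(2s-1) = ρ(x) e^{-λa}` for the Gamma density `ρ`, the rate of this jump
in either direction, weighted by `ρ ⊗ ρ`, is the same `ρ(x) ρ(v) e^{-λa} / a` (detailed balance).
Shearing each of the two parts of the generator onto the octant of parameters `(x, v, a)` therefore
turns `∫∫ (𝓛 f) g dρ dρ` into `-∫ ρ(x) ρ(v) e^{-λa} (Δf)(Δg) / a` with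
`Δf = f(x + a, v) - f(x, v + a)`, which is symmetric in `f` and `g`. For polynomials `Δf` is
divisible by `a`, so every integrand is a polynomial against `ρ(x) ρ(v) e^{-λa}`, hence integrable.
-/

open Set

theorem measurePreserving_add_comp_snd {G β : Type*} [AddGroup G] [MeasurableSpace G]
    [MeasurableAdd₂ G] [MeasurableSpace β] (μ : Measure G) [SFinite μ] [μ.IsAddRightInvariant]
    (ν : Measure β) [SFinite ν] {g : β → G} (hg : Measurable g) :
    MeasurePreserving (fun z : G × β => (z.1 + g z.2, z.2)) (μ.prod ν) (μ.prod ν) :=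
  Measure.measurePreserving_swap.comp <|
    ((MeasurePreserving.id ν).skew_product (g := fun y x => x + g y)
      (measurable_snd.add (hg.comp measurable_fst))
      (.of_forall fun y => map_add_right_eq_self μ (g y))).comp Measure.measurePreserving_swap

theorem _root_.MeasureTheory.Integrable.prod_prod_right_ae {α β γ E : Type*}
    [MeasurableSpace α] [MeasurableSpace β] [MeasurableSpace γ] [NormedAddCommGroup E]
    {μ : Measure α} {ν : Measure β} {ξ : Measure γ} [SFinite μ] [SFinite ν] [SFinite ξ]
    {H : α × β × γ → E} (hH : Integrable H (μ.prod (ν.prod ξ))) :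
    ∀ᵐ x ∂μ, ∀ᵐ y ∂ν, Integrable (fun z => H (x, y, z)) ξ :=
  hH.prod_right_ae.mono fun _ hx => hx.prod_right_ae

theorem setIntegral_Ioi_Ioi_eq_integral {Φ : ℝ → ℝ → ℝ} {H : ℝ × ℝ × ℝ → ℝ} (hH : Integrable H)
    (hsupp : Function.support H ⊆ Ioi 0 ×ˢ Ioi 0 ×ˢ univ)
    (hΦ : ∀ᵐ u, ∀ᵐ v, 0 < u → 0 < v → Φ u v = ∫ a, H (u, v, a)) :
    ∫ u in Ioi 0, ∫ v in Ioi 0, Φ u v = ∫ w, H w := by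
  have hzero : ∀ u v a, (u ∉ Ioi 0 ∨ v ∉ Ioi 0) → H (u, v, a) = 0 := fun u v a h =>
    Function.notMem_support.1 fun hw => h.elim (· (hsupp hw).1) (· (hsupp hw).2.1)
  have hzero_u : ∀ u ∉ Ioi (0 : ℝ), ∫ y : ℝ × ℝ, H (u, y) = 0 := fun u hu => by
    simp [hzero u _ _ (.inl hu)]
  rw [Measure.volume_eq_prod, integral_prod _ hH,
    ← setIntegral_eq_integral_of_forall_compl_eq_zero hzero_u]
  refine setIntegral_congr_ae measurableSet_Ioi ?_
  filter_upwards [hΦ, hH.prod_right_ae] with u hΦu hHu hu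
  have hzero_v : ∀ v ∉ Ioi (0 : ℝ), ∫ a, H (u, v, a) = 0 := fun v hv => by
    simp [hzero u v _ (.inr hv)]
  rw [Measure.volume_eq_prod, integral_prod _ hHu,
    ← setIntegral_eq_integral_of_forall_compl_eq_zero hzero_v]
  refine setIntegral_congr_ae measurableSet_Ioi ?_
  filter_upwards [hΦu] with v hΦv hv using hΦv hu hv

def shearFst : (ℝ × ℝ × ℝ) ≃ᵐ (ℝ × ℝ × ℝ) where
  toFun w := (w.1 + w.2.2, w.2)
  invFun w := (w.1 - w.2.2, w.2)
  left_inv w := by simp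
  right_inv w := by simp
  measurable_toFun := by simp only [Equiv.coe_fn_mk]; fun_prop
  measurable_invFun := by simp only [Equiv.coe_fn_symm_mk]; fun_prop

def shearSnd : (ℝ × ℝ × ℝ) ≃ᵐ (ℝ × ℝ × ℝ) where
  toFun w := (w.1, w.2.1 + w.2.2, w.2.2)
  invFun w := (w.1, w.2.1 - w.2.2, w.2.2)
  left_inv w := by simp
  right_inv w := by simp
  measurable_toFun := by simp only [Equiv.coe_fn_mk]; fun_prop
  measurable_invFun := by simp only [Equiv.coe_fn_symm_mk]; fun_prop

theorem measurePreserving_shearFst : MeasurePreserving shearFst :=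
  measurePreserving_add_comp_snd volume volume measurable_snd

theorem measurePreserving_shearSnd : MeasurePreserving shearSnd :=
  (MeasurePreserving.id volume).prod (measurePreserving_add_comp_snd volume volume measurable_id)

/-- A point `(x, v, a)` stands for the jump between `(x + a, v)` and `(x, v + a)`; `shearFst` and
`shearSnd` send it to `(y₁, y₂, a)`, where `(y₁, y₂)` is where this jump starts in the first,
resp. second, integral of `bondGen`. -/
def octant : Set (ℝ × ℝ × ℝ) := Ioi 0 ×ˢ Ioi 0 ×ˢ Ioi 0

theorem measurableSet_octant : MeasurableSet octant :=
  measurableSet_Ioi.prod (measurableSet_Ioi.prod measurableSet_Ioi)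

theorem mem_shearFst_image_octant {w : ℝ × ℝ × ℝ} :
    w ∈ shearFst '' octant ↔ 0 < w.2.1 ∧ w.2.2 ∈ Ioo 0 w.1 := by
  rw [MeasurableEquiv.image_eq_preimage_symm]
  simp only [shearFst, octant, MeasurableEquiv.symm_mk, MeasurableEquiv.coe_mk,
    Equiv.coe_fn_symm_mk, mem_preimage, mem_prod, mem_Ioi, mem_Ioo, sub_pos]
  tauto

theorem mem_shearSnd_image_octant {w : ℝ × ℝ × ℝ} :
    w ∈ shearSnd '' octant ↔ 0 < w.1 ∧ w.2.2 ∈ Ioo 0 w.2.1 := by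
  rw [MeasurableEquiv.image_eq_preimage_symm]
  simp only [shearSnd, octant, MeasurableEquiv.symm_mk, MeasurableEquiv.coe_mk,
    Equiv.coe_fn_symm_mk, mem_preimage, mem_prod, mem_Ioi, mem_Ioo, sub_pos]
  tauto

theorem integral_section_indicator_shearFst_image {F : ℝ × ℝ × ℝ → ℝ} {u v : ℝ} (hv : 0 < v) :
    ∫ a, (shearFst '' octant).indicator F (u, v, a) = ∫ a in Ioo 0 u, F (u, v, a) := by
  rw [← integral_indicator measurableSet_Ioo]
  congr 1 with a
  by_cases ha : a ∈ Ioo 0 u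
  · rw [indicator_of_mem (mem_shearFst_image_octant.2 ⟨hv, ha⟩), indicator_of_mem ha]
  · rw [indicator_of_notMem (fun h => ha (mem_shearFst_image_octant.1 h).2),
      indicator_of_notMem ha]

theorem integral_section_indicator_shearSnd_image {F : ℝ × ℝ × ℝ → ℝ} {u v : ℝ} (hu : 0 < u) :
    ∫ a, (shearSnd '' octant).indicator F (u, v, a) = ∫ a in Ioo 0 v, F (u, v, a) := by
  rw [← integral_indicator measurableSet_Ioo]
  congr 1 with a
  by_cases ha : a ∈ Ioo 0 v
  · rw [indicator_of_mem (mem_shearSnd_image_octant.2 ⟨hu, ha⟩), indicator_of_mem ha]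
  · rw [indicator_of_notMem (fun h => ha (mem_shearSnd_image_octant.1 h).2),
      indicator_of_notMem ha]

theorem gammaDensity_add_mul_one_sub_div_rpow (s lam : ℝ) {x a : ℝ} (hx : 0 ≤ x)
    (hxa : 0 < x + a) :
    gammaDensity s lam (x + a) * (1 - a / (x + a)) ^ (2 * s - 1)
      = gammaDensity s lam x * exp (-(lam * a)) := by
  have hratio : 1 - a / (x + a) = x / (x + a) := by field_simp; ring
  rw [hratio, div_rpow hx hxa.le]
  have : (x + a) ^ (2 * s - 1) ≠ 0 := (rpow_pos_of_pos hxa _).ne'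
  unfold gammaDensity
  rw [mul_add, neg_add, exp_add]
  field_simp

def jumpWeight (s lam : ℝ) (w : ℝ × ℝ × ℝ) : ℝ :=
  gammaDensity s lam w.1 * gammaDensity s lam w.2.1 * exp (-(lam * w.2.2))

def exchangeDiff (f : ℝ → ℝ → ℝ) (w : ℝ × ℝ × ℝ) : ℝ :=
  f (w.1 + w.2.2) w.2.1 - f w.1 (w.2.1 + w.2.2)

def bondIntegrandFst (s lam : ℝ) (f g : ℝ → ℝ → ℝ) (w : ℝ × ℝ × ℝ) : ℝ :=
  gammaDensity s lam w.1 * gammaDensity s lam w.2.1 *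
    ((1 - w.2.2 / w.1) ^ (2 * s - 1) / w.2.2 * (f (w.1 - w.2.2) (w.2.1 + w.2.2) - f w.1 w.2.1)) *
    g w.1 w.2.1

def bondIntegrandSnd (s lam : ℝ) (f g : ℝ → ℝ → ℝ) (w : ℝ × ℝ × ℝ) : ℝ :=
  gammaDensity s lam w.1 * gammaDensity s lam w.2.1 *
    ((1 - w.2.2 / w.2.1) ^ (2 * s - 1) / w.2.2 * (f (w.1 + w.2.2) (w.2.1 - w.2.2) - f w.1 w.2.1)) *
    g w.1 w.2.1

section Exchange

variable (s lam : ℝ) (f g : ℝ → ℝ → ℝ)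

theorem gammaDensity_mul_bondGen_mul (u v : ℝ) :
    gammaDensity s lam u * gammaDensity s lam v * (bondGen s f u v * g u v)
      = (∫ a in Ioo 0 u, bondIntegrandFst s lam f g (u, v, a))
        + ∫ a in Ioo 0 v, bondIntegrandSnd s lam f g (u, v, a) := by
  simp only [bondGen, bondIntegrandFst, bondIntegrandSnd, integral_mul_const, integral_const_mul]
  ring

theorem bondIntegrandFst_shearFst {w : ℝ × ℝ × ℝ} (hw : w ∈ octant) :
    bondIntegrandFst s lam f g (shearFst w)
      = -(jumpWeight s lam w * (exchangeDiff f w / w.2.2 * g (w.1 + w.2.2) w.2.1)) := by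
  obtain ⟨x, v, a⟩ := w
  obtain ⟨hx, -, ha⟩ : 0 < x ∧ 0 < v ∧ 0 < a := by simpa [octant] using hw
  have hbalance := gammaDensity_add_mul_one_sub_div_rpow s lam hx.le (by linarith : 0 < x + a)
  simp only [bondIntegrandFst, shearFst, MeasurableEquiv.coe_mk, Equiv.coe_fn_mk,
    add_sub_cancel_right, jumpWeight, exchangeDiff]
  linear_combination
    (gammaDensity s lam v * (f x (v + a) - f (x + a) v) / a * g (x + a) v) * hbalance

theorem bondIntegrandSnd_shearSnd {w : ℝ × ℝ × ℝ} (hw : w ∈ octant) :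
    bondIntegrandSnd s lam f g (shearSnd w)
      = jumpWeight s lam w * (exchangeDiff f w / w.2.2 * g w.1 (w.2.1 + w.2.2)) := by
  obtain ⟨x, v, a⟩ := w
  obtain ⟨-, hv, ha⟩ : 0 < x ∧ 0 < v ∧ 0 < a := by simpa [octant] using hw
  have hbalance := gammaDensity_add_mul_one_sub_div_rpow s lam hv.le (by linarith : 0 < v + a)
  simp only [bondIntegrandSnd, shearSnd, MeasurableEquiv.coe_mk, Equiv.coe_fn_mk,
    add_sub_cancel_right, jumpWeight, exchangeDiff]
  linear_combination
    (gammaDensity s lam x * (f (x + a) v - f x (v + a)) / a * g x (v + a)) * hbalance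

theorem integrableOn_bondIntegrandFst
    (h : IntegrableOn
      (fun w => jumpWeight s lam w * (exchangeDiff f w / w.2.2 * g (w.1 + w.2.2) w.2.1)) octant) :
    IntegrableOn (bondIntegrandFst s lam f g) (shearFst '' octant) := by
  rw [measurePreserving_shearFst.integrableOn_image shearFst.measurableEmbedding]
  exact h.neg.congr_fun (fun w hw => (bondIntegrandFst_shearFst s lam f g hw).symm)
    measurableSet_octant

theorem integrableOn_bondIntegrandSnd
    (h : IntegrableOn
      (fun w => jumpWeight s lam w * (exchangeDiff f w / w.2.2 * g w.1 (w.2.1 + w.2.2))) octant) :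
    IntegrableOn (bondIntegrandSnd s lam f g) (shearSnd '' octant) := by
  rw [measurePreserving_shearSnd.integrableOn_image shearSnd.measurableEmbedding]
  exact h.congr_fun (fun w hw => (bondIntegrandSnd_shearSnd s lam f g hw).symm)
    measurableSet_octant

theorem setIntegral_bondIntegrandFst :
    ∫ w in shearFst '' octant, bondIntegrandFst s lam f g w
      = -∫ w in octant,
          jumpWeight s lam w * (exchangeDiff f w / w.2.2 * g (w.1 + w.2.2) w.2.1) := by
  rw [measurePreserving_shearFst.setIntegral_image_emb shearFst.measurableEmbedding, ← integral_neg]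
  exact setIntegral_congr_fun measurableSet_octant fun _ hw =>
    bondIntegrandFst_shearFst s lam f g hw

theorem setIntegral_bondIntegrandSnd :
    ∫ w in shearSnd '' octant, bondIntegrandSnd s lam f g w
      = ∫ w in octant, jumpWeight s lam w * (exchangeDiff f w / w.2.2 * g w.1 (w.2.1 + w.2.2)) := by
  rw [measurePreserving_shearSnd.setIntegral_image_emb shearSnd.measurableEmbedding]
  exact setIntegral_congr_fun measurableSet_octant fun _ hw =>
    bondIntegrandSnd_shearSnd s lam f g hw

theorem integral_gammaDensity_mul_bondGen_mul
    (h₁ : IntegrableOn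
      (fun w => jumpWeight s lam w * (exchangeDiff f w / w.2.2 * g (w.1 + w.2.2) w.2.1)) octant)
    (h₂ : IntegrableOn
      (fun w => jumpWeight s lam w * (exchangeDiff f w / w.2.2 * g w.1 (w.2.1 + w.2.2))) octant) :
    ∫ u in Ioi 0, ∫ v in Ioi 0,
        gammaDensity s lam u * gammaDensity s lam v * (bondGen s f u v * g u v)
      = -∫ w in octant, jumpWeight s lam w * (exchangeDiff f w * exchangeDiff g w / w.2.2) := by
  set H₁ := (shearFst '' octant).indicator (bondIntegrandFst s lam f g)
  set H₂ := (shearSnd '' octant).indicator (bondIntegrandSnd s lam f g)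
  have hm₁ : MeasurableSet (shearFst '' octant) :=
    shearFst.measurableSet_image.2 measurableSet_octant
  have hm₂ : MeasurableSet (shearSnd '' octant) :=
    shearSnd.measurableSet_image.2 measurableSet_octant
  have hH₁ : Integrable H₁ :=
    (integrable_indicator_iff hm₁).2 (integrableOn_bondIntegrandFst s lam f g h₁)
  have hH₂ : Integrable H₂ :=
    (integrable_indicator_iff hm₂).2 (integrableOn_bondIntegrandSnd s lam f g h₂)
  have hsupp : Function.support (H₁ + H₂) ⊆ Ioi 0 ×ˢ Ioi 0 ×ˢ univ := by
    refine (Function.support_add _ _).trans (union_subset ?_ ?_) <;>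
      refine support_indicator_subset.trans fun w hw => ?_
    · obtain ⟨hv, ha⟩ := mem_shearFst_image_octant.1 hw
      exact ⟨ha.1.trans ha.2, hv, trivial⟩
    · obtain ⟨hu, ha⟩ := mem_shearSnd_image_octant.1 hw
      exact ⟨hu, ha.1.trans ha.2, trivial⟩
  have hsections : ∀ᵐ u, ∀ᵐ v, 0 < u → 0 < v →
      gammaDensity s lam u * gammaDensity s lam v * (bondGen s f u v * g u v)
        = ∫ a, (H₁ + H₂) (u, v, a) := by
    filter_upwards [hH₁.prod_prod_right_ae, hH₂.prod_prod_right_ae] with u hu₁ hu₂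
    filter_upwards [hu₁, hu₂] with v hv₁ hv₂ hu hv
    rw [Pi.add_def, integral_add hv₁ hv₂, integral_section_indicator_shearFst_image hv,
      integral_section_indicator_shearSnd_image hu, gammaDensity_mul_bondGen_mul]
  rw [setIntegral_Ioi_Ioi_eq_integral (hH₁.add hH₂) hsupp hsections, integral_add' hH₁ hH₂,
    integral_indicator hm₁, integral_indicator hm₂, setIntegral_bondIntegrandFst,
    setIntegral_bondIntegrandSnd, neg_add_eq_sub, ← integral_sub h₂ h₁, ← integral_neg]
  refine setIntegral_congr_fun measurableSet_octant fun w _ => ?_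
  simp only [exchangeDiff]
  ring

end Exchange

open MvPolynomial

theorem aeval_sub_aeval_mem {R S σ : Type*} [CommRing R] [CommRing S] [Algebra R S] (I : Ideal S)
    {x y : σ → S} (h : ∀ i, x i - y i ∈ I) (p : MvPolynomial σ R) :
    aeval x p - aeval y p ∈ I := by
  rw [← Ideal.Quotient.eq]
  change (Ideal.Quotient.mkₐ R I).comp (aeval x) p = (Ideal.Quotient.mkₐ R I).comp (aeval y) p
  congr 1
  exact algHom_ext fun i => by simpa using Ideal.Quotient.eq.2 (h i)

theorem eval_aeval {R σ τ : Type*} [CommSemiring R] (w : τ → R) (g : σ → MvPolynomial τ R)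
    (q : MvPolynomial σ R) :
    eval w (aeval g q) = eval (fun i => eval w (g i)) q := by
  rw [aeval_eq_bind₁]
  exact eval₂Hom_bind₁ _ _ _ _

def shiftFst : Fin 2 → MvPolynomial (Fin 3) ℝ := ![X 0 + X 2, X 1]

def shiftSnd : Fin 2 → MvPolynomial (Fin 3) ℝ := ![X 0, X 1 + X 2]

theorem eval_aeval_shiftFst (q : MvPolynomial (Fin 2) ℝ) (w : ℝ × ℝ × ℝ) :
    eval ![w.1, w.2.1, w.2.2] (aeval shiftFst q) = eval ![w.1 + w.2.2, w.2.1] q := by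
  rw [eval_aeval]
  exact congrArg (fun y => eval y q) (funext fun i => by fin_cases i <;> simp [shiftFst])

theorem eval_aeval_shiftSnd (q : MvPolynomial (Fin 2) ℝ) (w : ℝ × ℝ × ℝ) :
    eval ![w.1, w.2.1, w.2.2] (aeval shiftSnd q) = eval ![w.1, w.2.1 + w.2.2] q := by
  rw [eval_aeval]
  exact congrArg (fun y => eval y q) (funext fun i => by fin_cases i <;> simp [shiftSnd])

theorem exists_exchangeDiff_eq_mul (p : MvPolynomial (Fin 2) ℝ) :
    ∃ r : MvPolynomial (Fin 3) ℝ, ∀ w : ℝ × ℝ × ℝ,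
      exchangeDiff (fun z₁ z₂ => eval ![z₁, z₂] p) w = w.2.2 * eval ![w.1, w.2.1, w.2.2] r := by
  have hshift : ∀ i, shiftFst i - shiftSnd i ∈ Ideal.span {(X 2 : MvPolynomial (Fin 3) ℝ)} := by
    intro i
    fin_cases i <;> simp [shiftFst, shiftSnd]
  obtain ⟨r, hr⟩ := Ideal.mem_span_singleton'.1 (aeval_sub_aeval_mem _ hshift p)
  refine ⟨r, fun w => ?_⟩
  rw [exchangeDiff, ← eval_aeval_shiftFst, ← eval_aeval_shiftSnd, ← map_sub, ← hr, map_mul, eval_X]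
  simp [mul_comm]

theorem integrableOn_pow_mul_rpow_mul_exp_neg_mul (n : ℕ) {t b : ℝ} (ht : -1 < t) (hb : 0 < b) :
    IntegrableOn (fun x : ℝ => x ^ n * (x ^ t * exp (-(b * x)))) (Ioi 0) := by
  refine (integrableOn_rpow_mul_exp_neg_mul_rpow (s := t + n)
    (by linarith [n.cast_nonneg (α := ℝ)]) one_pos hb).congr_fun (fun x hx => ?_) measurableSet_Ioi
  dsimp only
  rw [rpow_one, rpow_add hx, rpow_natCast, neg_mul]
  ring

theorem integrableOn_octant_mul_mul {f₁ f₂ f₃ : ℝ → ℝ} (h₁ : IntegrableOn f₁ (Ioi 0))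
    (h₂ : IntegrableOn f₂ (Ioi 0)) (h₃ : IntegrableOn f₃ (Ioi 0)) :
    IntegrableOn (fun w : ℝ × ℝ × ℝ => f₁ w.1 * (f₂ w.2.1 * f₃ w.2.2)) octant := by
  rw [IntegrableOn, octant, Measure.volume_eq_prod, ← Measure.prod_restrict, Measure.volume_eq_prod,
    ← Measure.prod_restrict]
  exact h₁.mul_prod (h₂.mul_prod h₃)

theorem integrableOn_jumpWeight_mul_eval {s lam : ℝ} (hs : 0 < s) (hlam : 0 < lam)
    (P : MvPolynomial (Fin 3) ℝ) :
    IntegrableOn (fun w => jumpWeight s lam w * eval ![w.1, w.2.1, w.2.2] P) octant := by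
  have hρ : ∀ n : ℕ, IntegrableOn (fun x => x ^ n * gammaDensity s lam x) (Ioi 0) := fun n =>
    IntegrableOn.congr_fun
      ((integrableOn_pow_mul_rpow_mul_exp_neg_mul n (t := 2 * s - 1) (by linarith) hlam).const_mul
        (lam ^ (2 * s) / Gamma (2 * s)))
      (fun x _ => by simp only [gammaDensity]; ring) measurableSet_Ioi
  have hexp : ∀ n : ℕ, IntegrableOn (fun a => a ^ n * exp (-(lam * a))) (Ioi 0) := fun n =>
    (integrableOn_pow_mul_rpow_mul_exp_neg_mul n (t := 0) (by norm_num) hlam).congr_fun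
      (fun a _ => by simp only [rpow_zero, one_mul]) measurableSet_Ioi
  simp only [eval_eq', Finset.mul_sum]
  refine integrable_finsetSum _ fun d _ => ?_
  refine IntegrableOn.congr_fun ((integrableOn_octant_mul_mul (hρ (d 0)) (hρ (d 1))
    (hexp (d 2))).const_mul (coeff d P)) (fun w _ => ?_) measurableSet_octant
  simp only [jumpWeight, Fin.prod_univ_three, Matrix.cons_val_zero, Matrix.cons_val_one,
    Matrix.cons_val_two, Matrix.head_cons, Matrix.tail_cons]
  ring

theorem integrableOn_jumpWeight_mul_exchangeDiff_div_mul {s lam : ℝ} (hs : 0 < s) (hlam : 0 < lam)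
    (p : MvPolynomial (Fin 2) ℝ) (Q : MvPolynomial (Fin 3) ℝ) :
    IntegrableOn (fun w => jumpWeight s lam w *
      (exchangeDiff (fun z₁ z₂ => eval ![z₁, z₂] p) w / w.2.2 * eval ![w.1, w.2.1, w.2.2] Q))
      octant := by
  obtain ⟨r, hr⟩ := exists_exchangeDiff_eq_mul p
  refine (integrableOn_jumpWeight_mul_eval hs hlam (r * Q)).congr_fun (fun w hw => ?_)
    measurableSet_octant
  dsimp only
  rw [hr, mul_div_cancel_left₀ _ hw.2.2.ne', map_mul]

/-- Reversibility of the bulk exchange generator on a single bond with respect to the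
product of two Gamma(2s, lam) distributions, on polynomial functions. -/
theorem bond_reversibility (s lam : ℝ) (hs : 0 < s) (hlam : 0 < lam)
    (p q : MvPolynomial (Fin 2) ℝ) :
    (∫ y₁ in Set.Ioi (0 : ℝ), ∫ y₂ in Set.Ioi (0 : ℝ),
        gammaDensity s lam y₁ * gammaDensity s lam y₂ *
          (bondGen s (fun z₁ z₂ => MvPolynomial.eval ![z₁, z₂] p) y₁ y₂ *
            MvPolynomial.eval ![y₁, y₂] q))
    = ∫ y₁ in Set.Ioi (0 : ℝ), ∫ y₂ in Set.Ioi (0 : ℝ),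
        gammaDensity s lam y₁ * gammaDensity s lam y₂ *
          (MvPolynomial.eval ![y₁, y₂] p *
            bondGen s (fun z₁ z₂ => MvPolynomial.eval ![z₁, z₂] q) y₁ y₂) := by
  have key : ∀ p q : MvPolynomial (Fin 2) ℝ,
      ∫ u in Ioi 0, ∫ v in Ioi 0, gammaDensity s lam u * gammaDensity s lam v *
          (bondGen s (fun z₁ z₂ => eval ![z₁, z₂] p) u v * eval ![u, v] q)
        = -∫ w in octant, jumpWeight s lam w * (exchangeDiff (fun z₁ z₂ => eval ![z₁, z₂] p) w *
            exchangeDiff (fun z₁ z₂ => eval ![z₁, z₂] q) w / w.2.2) := fun p q =>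
    integral_gammaDensity_mul_bondGen_mul s lam _ _
      (by simpa only [eval_aeval_shiftFst] using
        integrableOn_jumpWeight_mul_exchangeDiff_div_mul hs hlam p (aeval shiftFst q))
      (by simpa only [eval_aeval_shiftSnd] using
        integrableOn_jumpWeight_mul_exchangeDiff_div_mul hs hlam p (aeval shiftSnd q))
  calc _ = -∫ w in octant, jumpWeight s lam w * (exchangeDiff (fun z₁ z₂ => eval ![z₁, z₂] q) w *
            exchangeDiff (fun z₁ z₂ => eval ![z₁, z₂] p) w / w.2.2) := by
        simp only [key, mul_comm (exchangeDiff (fun z₁ z₂ => eval ![z₁, z₂] p) _)]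
    _ = _ := by simp only [← key, mul_comm (eval ![_, _] p)]

end HeatModel
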